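/- arXiv:1411.5192 — 6 statements merged into one kernel-verified Lean document; each statement's English description precedes it below -/
import Mathlib

section
/- Let p, q > 1 be real numbers and set m := min{p-1, q-1}. Then for every t > 0 one has g(p,q;t) ≥ (m/(p-1))·(1 + t^(q-p))^(1/(p-1)) > m/(p-1). -/
open Real

/-- `g p q t = ((p-1)·t^(p-2) + (q-1)·t^(q-2)) / ((p-1)·(t^(p-1)+t^(q-1))^((p-2)/(p-1)))`. -/
noncomputable def g (p q t : ℝ) : ℝ :=
  ((p - 1) * t ^ (p - 2) + (q - 1) * t ^ (q - 2)) /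
    ((p - 1) * (t ^ (p - 1) + t ^ (q - 1)) ^ ((p - 2) / (p - 1)))

/-!
Factoring `t^(p-2)` out of the numerator and, via `t^(p-1) + t^(q-1) = t^(p-1) (1 + s)` with
`s = t^(q-p)`, out of the denominator, one gets
`g = ((p-1) + (q-1) s) / ((p-1) (1+s)^((p-2)/(p-1)))`.
Bounding both coefficients below by `m` leaves `m (1+s)^(1 - (p-2)/(p-1)) / (p-1)`, and
`1 - (p-2)/(p-1) = 1/(p-1)`; the strict bound holds because `1 + s > 1`.
-/

lemma Real.rpow_add_rpow_eq_mul_one_add {t : ℝ} (ht : 0 < t) (a b : ℝ) :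
    t ^ a + t ^ b = t ^ a * (1 + t ^ (b - a)) := by
  rw [mul_one_add, ← rpow_add ht, add_sub_cancel]

lemma g_eq {p : ℝ} (hp : p ≠ 1) (q : ℝ) {t : ℝ} (ht : 0 < t) :
    g p q t = ((p - 1) + (q - 1) * t ^ (q - p)) /
      ((p - 1) * (1 + t ^ (q - p)) ^ ((p - 2) / (p - 1))) := by
  have hp1 : p - 1 ≠ 0 := sub_ne_zero.mpr hp
  have hnum : (p - 1) * t ^ (p - 2) + (q - 1) * t ^ (q - 2) =
      t ^ (p - 2) * ((p - 1) + (q - 1) * t ^ (q - p)) := by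
    rw [mul_add, mul_left_comm, ← rpow_add ht]
    ring_nf
  have hden : (t ^ (p - 1) + t ^ (q - 1)) ^ ((p - 2) / (p - 1)) =
      t ^ (p - 2) * (1 + t ^ (q - p)) ^ ((p - 2) / (p - 1)) := by
    rw [rpow_add_rpow_eq_mul_one_add ht, mul_rpow (rpow_nonneg ht.le _) (by positivity),
      ← rpow_mul ht.le, mul_div_cancel₀ _ hp1, sub_sub_sub_cancel_right]
  rw [g, hnum, hden, mul_left_comm, mul_div_mul_left _ _ (rpow_pos_of_pos ht _).ne']

lemma Real.div_rpow_div_sub_one_eq {x : ℝ} (hx : 0 < x) {r : ℝ} (hr : r ≠ 1) :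
    x / x ^ ((r - 2) / (r - 1)) = x ^ (1 / (r - 1)) := by
  have hr1 : r - 1 ≠ 0 := sub_ne_zero.mpr hr
  nth_rw 1 [← rpow_one x]
  rw [← rpow_sub hx]
  congr 1
  field_simp
  ring

/-- For `p, q > 1`, `m := min (p-1) (q-1)`, and every `t > 0`,
`g p q t ≥ (m/(p-1))·(1 + t^(q-p))^(1/(p-1)) > m/(p-1)`. -/
theorem stmt1 (p q : ℝ) (hp : 1 < p) (hq : 1 < q) (t : ℝ) (ht : 0 < t) :
    min (p - 1) (q - 1) / (p - 1) * (1 + t ^ (q - p)) ^ (1 / (p - 1)) ≤ g p q t ∧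
      min (p - 1) (q - 1) / (p - 1) <
        min (p - 1) (q - 1) / (p - 1) * (1 + t ^ (q - p)) ^ (1 / (p - 1)) := by
  set m := min (p - 1) (q - 1)
  set s := t ^ (q - p)
  have hp1 : 0 < p - 1 := sub_pos.mpr hp
  have hm : 0 < m := lt_min hp1 (sub_pos.mpr hq)
  have hs : 0 < s := rpow_pos_of_pos ht _
  have hnum : m * (1 + s) ≤ (p - 1) + (q - 1) * s := by
    rw [mul_one_add]
    gcongr
    exacts [min_le_left _ _, min_le_right _ _]
  constructor
  · calc m / (p - 1) * (1 + s) ^ (1 / (p - 1))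
        = m * (1 + s) / ((p - 1) * (1 + s) ^ ((p - 2) / (p - 1))) := by
          rw [← div_rpow_div_sub_one_eq (by positivity) hp.ne', div_mul_div_comm]
      _ ≤ g p q t := by
          rw [g_eq hp.ne' q ht]
          gcongr
  · exact lt_mul_of_one_lt_right (div_pos hm hp1)
      (one_lt_rpow (lt_add_of_pos_right 1 hs) (one_div_pos.mpr hp1))
end

section
/- Let 1 < q < p be real numbers. Then there exists ρ > 0 (depending only on p and q) such that for every open set Ω ⊆ ℝ^N, every pair of functions u, φ : ℝ^N → ℝ differentiable at every point of Ω with u > 0 and φ ≥ 0 on Ω, and every x ∈ Ω, one has (|∇u(x)|^(p-2) + |∇u(x)|^(q-2)) · ⟨∇u(x), ∇(φ^p/(u^(p-1) + u^(q-1)))(x)⟩ ≤ (|∇φ(x)|^p + |∇(φ^(p/q))(x)|^q)/ρ. -/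
/-!
Write `a = ∇u x`, `b = ∇φ x`, `s = u x`, `t = φ x` and `D(s) = s^(p-1) + s^(q-1)`. The quotient
rule and `⟪a, b⟫ ≤ ‖a‖ ‖b‖` reduce the claim to a scalar inequality. Since `s D'(s) ≥ (q-1) D(s)`
and `D(s) ≥ s^(r-1)` for `r ∈ {p, q}`, the part carried by `‖a‖^(r-2)` is either nonpositive or at
most `p t^(p-1) ‖b‖ G^(r-1) - (q-1) t^p G^r` with `G = ‖a‖ / s`. Young's inequality
`y x^(r-1) ≤ ε x^r + ε^(1-r) y^r` with `ε = q - 1` and `x = t^(p/r) G` bounds this by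
`(q-1)^(1-r) p^r t^(p-r) ‖b‖^r`; for `r = q` the factor `t^(p-q) ‖b‖^q` is at most
`‖∇(φ^(p/q))‖^q = (p/q)^q t^(p-q) ‖b‖^q`.
-/

open Real InnerProductSpace
open scoped RealInnerProductSpace

lemma mul_rpow_sub_one_le {r ε x y : ℝ} (hr : 1 < r) (hε : 0 < ε) (hx : 0 ≤ x) (hy : 0 ≤ y) :
    y * x ^ (r - 1) ≤ ε * x ^ r + ε ^ (1 - r) * y ^ r := by
  rcases le_or_gt x (y / ε) with h | h
  · calc y * x ^ (r - 1) ≤ y * (y / ε) ^ (r - 1) := by gcongr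
      _ = ε ^ (1 - r) * y ^ r := by
        rw [div_rpow hy hε.le, div_eq_mul_inv, ← rpow_neg hε.le, neg_sub, ← mul_assoc,
          ← rpow_one_add' hy (by linarith), add_sub_cancel, mul_comm]
      _ ≤ _ := le_add_of_nonneg_left (by positivity)
  · have hyx : y ≤ ε * x := by rw [div_lt_iff₀ hε] at h; linarith
    calc y * x ^ (r - 1) ≤ ε * x * x ^ (r - 1) := by gcongr
      _ = ε * x ^ r := by rw [mul_assoc, ← rpow_one_add' hx (by linarith), add_sub_cancel]
      _ ≤ _ := le_add_of_nonneg_right (by positivity)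

lemma picone_bracket_le {p r ε t B x : ℝ} (hp : 1 < p) (hr : 1 < r) (hε : 0 < ε) (ht : 0 ≤ t)
    (hB : 0 ≤ B) (hx : 0 ≤ x) :
    p * t ^ (p - 1) * B * x ^ (r - 1) - ε * t ^ p * x ^ r ≤
      ε ^ (1 - r) * p ^ r * t ^ (p - r) * B ^ r := by
  have hr0 : r ≠ 0 := by positivity
  have hyoung := mul_rpow_sub_one_le hr hε (x := t ^ (p / r) * x) (y := p * t ^ (p / r - 1) * B)
    (by positivity) (by positivity)
  rw [mul_rpow (by positivity) hx, mul_rpow (by positivity) hx, ← rpow_mul ht, ← rpow_mul ht,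
    div_mul_cancel₀ p hr0, mul_rpow (by positivity) hB, mul_rpow (by positivity) (by positivity),
    ← rpow_mul ht, sub_one_mul, div_mul_cancel₀ p hr0] at hyoung
  have hexp : p / r - 1 + p / r * (r - 1) = p - 1 := by field_simp; ring
  rw [← hexp, rpow_add' ht (by linarith)]
  linarith

lemma picone_term_le {p r ε s t A B D : ℝ} (hp : 1 < p) (hr : 1 < r) (hε : 0 < ε) (hs : 0 < s)
    (ht : 0 ≤ t) (hA : 0 ≤ A) (hB : 0 ≤ B) (hD : s ^ (r - 1) ≤ D) :
    A ^ (r - 2) * (p * t ^ (p - 1) * B * A - ε * t ^ p * A ^ 2 / s) / D ≤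
      ε ^ (1 - r) * p ^ r * t ^ (p - r) * B ^ r := by
  have hsr : 0 < s ^ (r - 1) := by positivity
  rcases le_or_gt (A ^ (r - 2) * (p * t ^ (p - 1) * B * A - ε * t ^ p * A ^ 2 / s)) 0 with
    hneg | hpos
  · exact (div_nonpos_of_nonpos_of_nonneg hneg (hsr.trans_le hD).le).trans (by positivity)
  calc _ ≤ A ^ (r - 2) * (p * t ^ (p - 1) * B * A - ε * t ^ p * A ^ 2 / s) / s ^ (r - 1) :=
        div_le_div_of_nonneg_left hpos.le hsr hD
    _ = p * t ^ (p - 1) * B * (A / s) ^ (r - 1) - ε * t ^ p * (A / s) ^ r := by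
        have hA1 : A ^ (r - 1) = A ^ (r - 2) * A := by
          rw [← rpow_add_one' hA (by linarith)]; ring_nf
        have hA2 : A ^ r = A ^ (r - 2) * A ^ 2 := by
          rw [← rpow_natCast, ← rpow_add' hA (by norm_num; linarith)]; norm_num
        have hs1 : s ^ r = s ^ (r - 1) * s := by
          rw [← rpow_add_one hs.ne']; ring_nf
        rw [div_rpow hA hs.le, div_rpow hA hs.le, hA1, hA2, hs1]
        field_simp
    _ ≤ _ := picone_bracket_le hp hr hε ht hB (by positivity)

lemma picone_scalar_le {p q ε s t A B IP D D' : ℝ} (hq : 1 < q) (hp : 1 < p) (hε : 0 < ε)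
    (hs : 0 < s) (ht : 0 ≤ t) (hA : 0 ≤ A) (hB : 0 ≤ B) (hIP : IP ≤ A * B)
    (hDp : s ^ (p - 1) ≤ D) (hDq : s ^ (q - 1) ≤ D) (hD' : ε * D ≤ s * D') :
    (A ^ (p - 2) + A ^ (q - 2)) * (p * t ^ (p - 1) * IP / D - t ^ p * D' * A ^ 2 / D ^ 2) ≤
      ε ^ (1 - p) * p ^ p * B ^ p + ε ^ (1 - q) * p ^ q * t ^ (p - q) * B ^ q := by
  have hDpos : 0 < D := (rpow_pos_of_pos hs _).trans_le hDp
  set K := p * t ^ (p - 1) * B * A - ε * t ^ p * A ^ 2 / s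
  have hK : p * t ^ (p - 1) * IP / D - t ^ p * D' * A ^ 2 / D ^ 2 ≤ K / D := by
    have hgap : K / D - (p * t ^ (p - 1) * IP / D - t ^ p * D' * A ^ 2 / D ^ 2) =
        p * t ^ (p - 1) * (A * B - IP) / D + t ^ p * A ^ 2 * (s * D' - ε * D) / (s * D ^ 2) := by
      simp only [K]; field_simp; ring
    have hIP' : 0 ≤ A * B - IP := sub_nonneg.mpr hIP
    have hD'' : 0 ≤ s * D' - ε * D := sub_nonneg.mpr hD'
    rw [← sub_nonneg, hgap]
    positivity
  have hterm_p := picone_term_le hp hp hε hs ht hA hB hDp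
  rw [sub_self, rpow_zero, mul_one] at hterm_p
  calc _ ≤ (A ^ (p - 2) + A ^ (q - 2)) * (K / D) := mul_le_mul_of_nonneg_left hK (by positivity)
    _ = A ^ (p - 2) * K / D + A ^ (q - 2) * K / D := by ring
    _ ≤ _ := add_le_add hterm_p (picone_term_le hp hq hε hs ht hA hB hDq)

section Gradient

variable {E : Type*} [NormedAddCommGroup E] [InnerProductSpace ℝ E] [CompleteSpace E]
  {f g : E → ℝ} {f' g' x : E}

theorem HasDerivAt.comp_hasGradientAt {h : ℝ → ℝ} {h' : ℝ} (hh : HasDerivAt h h' (f x))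
    (hf : HasGradientAt f f' x) : HasGradientAt (fun y => h (f y)) (h' • f') x := by
  rw [hasGradientAt_iff_hasFDerivAt] at hf ⊢
  rw [map_smulₛₗ, conj_trivial]
  exact hh.comp_hasFDerivAt x hf

theorem HasGradientAt.div (hf : HasGradientAt f f' x) (hg : HasGradientAt g g' x)
    (hx : g x ≠ 0) :
    HasGradientAt (fun y => f y / g y) ((g x)⁻¹ • f' - (f x / g x ^ 2) • g') x := by
  rw [hasGradientAt_iff_hasFDerivAt] at hf hg ⊢
  have hderiv := hf.fun_mul ((hasDerivAt_inv hx).comp_hasFDerivAt x hg)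
  simp only [Function.comp_def, ← div_eq_mul_inv] at hderiv
  refine hderiv.congr_fderiv ?_
  ext v
  simp only [neg_smul, smul_neg, add_apply, neg_apply, smul_apply, toDual_apply_apply, smul_eq_mul,
    map_sub, map_smul, sub_apply]
  ring

variable {u φ : E → ℝ} {p q : ℝ}

theorem inner_gradient_picone_quotient (hp : 1 ≤ p) (hu : DifferentiableAt ℝ u x)
    (hφ : DifferentiableAt ℝ φ x) (hs : 0 < u x) :
    ⟪gradient u x, gradient (fun y => φ y ^ p / (u y ^ (p - 1) + u y ^ (q - 1))) x⟫ =
      p * φ x ^ (p - 1) * ⟪gradient u x, gradient φ x⟫ / (u x ^ (p - 1) + u x ^ (q - 1)) -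
        φ x ^ p * ((p - 1) * u x ^ (p - 2) + (q - 1) * u x ^ (q - 2)) * ‖gradient u x‖ ^ 2 /
          (u x ^ (p - 1) + u x ^ (q - 1)) ^ 2 := by
  have hD : u x ^ (p - 1) + u x ^ (q - 1) ≠ 0 := by positivity
  have hquot := ((hasDerivAt_rpow_const (Or.inr hp)).comp_hasGradientAt hφ.hasGradientAt).div
    (((hasDerivAt_rpow_const (Or.inl hs.ne')).fun_add
      (hasDerivAt_rpow_const (Or.inl hs.ne'))).comp_hasGradientAt hu.hasGradientAt) hD
  rw [hquot.gradient]
  simp only [inner_sub_right, real_inner_smul_right, real_inner_self_eq_norm_sq, sub_sub,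
    one_add_one_eq_two]
  ring

theorem picone_gradient_le (hq : 1 < q) (hqp : q < p) (hu : DifferentiableAt ℝ u x)
    (hφ : DifferentiableAt ℝ φ x) (hs : 0 < u x) (ht : 0 ≤ φ x) :
    (‖gradient u x‖ ^ (p - 2) + ‖gradient u x‖ ^ (q - 2)) *
        ⟪gradient u x, gradient (fun y => φ y ^ p / (u y ^ (p - 1) + u y ^ (q - 1))) x⟫ ≤
      (q - 1) ^ (1 - p) * p ^ p * ‖gradient φ x‖ ^ p +
        (q - 1) ^ (1 - q) * p ^ q * φ x ^ (p - q) * ‖gradient φ x‖ ^ q := by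
  have hp : 1 < p := hq.trans hqp
  have hD' : (q - 1) * (u x ^ (p - 1) + u x ^ (q - 1)) ≤
      u x * ((p - 1) * u x ^ (p - 2) + (q - 1) * u x ^ (q - 2)) := by
    rw [show p - 2 = p - 1 - 1 by ring, show q - 2 = q - 1 - 1 by ring,
      rpow_sub_one hs.ne' (p - 1), rpow_sub_one hs.ne' (q - 1)]
    field_simp
    nlinarith [rpow_pos_of_pos hs (p - 1)]
  rw [inner_gradient_picone_quotient hp.le hu hφ hs]
  exact picone_scalar_le hq hp (sub_pos.mpr hq) hs ht (norm_nonneg _) (norm_nonneg _)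
    (real_inner_le_norm _ _) (le_add_of_nonneg_right (by positivity))
    (le_add_of_nonneg_left (by positivity)) hD'

theorem rpow_sub_mul_norm_rpow_le_norm_gradient_rpow (hq : 0 < q) (hqp : q ≤ p)
    (hφ : DifferentiableAt ℝ φ x) (ht : 0 ≤ φ x) :
    φ x ^ (p - q) * ‖gradient φ x‖ ^ q ≤ ‖gradient (fun y => φ y ^ (p / q)) x‖ ^ q := by
  have hpq : 1 ≤ p / q := (one_le_div hq).mpr hqp
  rw [((hasDerivAt_rpow_const (Or.inr hpq)).comp_hasGradientAt hφ.hasGradientAt).gradient,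
    norm_smul, norm_of_nonneg (by positivity), mul_rpow (by positivity) (norm_nonneg _),
    mul_rpow (by positivity) (by positivity), ← rpow_mul ht, sub_one_mul,
    div_mul_cancel₀ _ hq.ne', mul_assoc]
  exact le_mul_of_one_le_left (by positivity) (one_le_rpow hpq hq.le)

end Gradient

/-- Picone-type inequality for the (p,q)-Laplacian: for `1 < q < p` there exists `ρ > 0`
(depending only on `p`, `q`) such that for all open `Ω ⊆ ℝ^N`, differentiable `u > 0`,
`φ ≥ 0` on `Ω`, and `x ∈ Ω`:
`(|∇u|^(p-2) + |∇u|^(q-2))·⟨∇u, ∇(φ^p/(u^(p-1)+u^(q-1)))⟩ ≤ (|∇φ|^p + |∇(φ^(p/q))|^q)/ρ`. -/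
theorem stmt2 (p q : ℝ) (hq : 1 < q) (hqp : q < p) :
    ∃ ρ : ℝ, 0 < ρ ∧
      ∀ (N : ℕ), 0 < N →
        ∀ (Ω : Set (EuclideanSpace ℝ (Fin N))), IsOpen Ω →
          ∀ (u φ : EuclideanSpace ℝ (Fin N) → ℝ),
            (∀ x ∈ Ω, DifferentiableAt ℝ u x) →
            (∀ x ∈ Ω, DifferentiableAt ℝ φ x) →
            (∀ x ∈ Ω, 0 < u x) →
            (∀ x ∈ Ω, 0 ≤ φ x) →
            ∀ x ∈ Ω,
              (‖gradient u x‖ ^ (p - 2) + ‖gradient u x‖ ^ (q - 2)) *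
                  ⟪gradient u x,
                    gradient (fun y => φ y ^ p / (u y ^ (p - 1) + u y ^ (q - 1))) x⟫ ≤
                (‖gradient φ x‖ ^ p + ‖gradient (fun y => φ y ^ (p / q)) x‖ ^ q) / ρ := by
  have hp : 1 < p := hq.trans hqp
  refine ⟨((q - 1) ^ (1 - p) * p ^ p + (q - 1) ^ (1 - q) * p ^ q)⁻¹, by positivity, ?_⟩
  intro N _ Ω _ u φ hu hφ hu_pos hφ_nonneg x hx
  have hpoint := picone_gradient_le hq hqp (hu x hx) (hφ x hx) (hu_pos x hx) (hφ_nonneg x hx)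
  have hnorm := rpow_sub_mul_norm_rpow_le_norm_gradient_rpow (by linarith) hqp.le (hφ x hx)
    (hφ_nonneg x hx)
  have hcp : 0 ≤ (q - 1) ^ (1 - p) * p ^ p := by positivity
  have hcq : 0 ≤ (q - 1) ^ (1 - q) * p ^ q := by positivity
  have hBp : 0 ≤ ‖gradient φ x‖ ^ p := by positivity
  have hBq : 0 ≤ φ x ^ (p - q) * ‖gradient φ x‖ ^ q :=
    mul_nonneg (rpow_nonneg (hφ_nonneg x hx) _) (by positivity)
  rw [div_inv_eq_mul]
  nlinarith [mul_le_mul_of_nonneg_left hnorm hcq, mul_nonneg hcq hBp,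
    mul_nonneg hcp (hBq.trans hnorm)]
end

section
/- Let 1 < q < p be real numbers and let ρ₁ > 0 satisfy ρ₁ ≤ g(p,q;t) for all t > 0. Then for every open set Ω ⊆ ℝ^N, every pair of functions u, φ : ℝ^N → ℝ differentiable at every point of Ω with u > 0 and φ ≥ 0 on Ω, and every x ∈ Ω, one has |∇u(x)|^(p-2) · ⟨∇u(x), ∇(φ^p/(u^(p-1) + u^(q-1)))(x)⟩ ≤ |∇φ(x)|^p / ρ₁^(p-1). -/
open scoped RealInnerProductSpace

theorem young_inequality_weighted {p ρ t B : ℝ} (hp : 1 < p) (hρ : 0 < ρ) (ht : 0 ≤ t)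
    (hB : 0 ≤ B) : p * (t ^ (p - 1) * B) ≤ (p - 1) * ρ * t ^ p + B ^ p / ρ ^ (p - 1) := by
  have hp₀ : 0 < p := by linarith
  have hp₁ : 0 < p - 1 := by linarith
  have hconj : (p / (p - 1)).HolderConjugate p := by
    rw [Real.holderConjugate_iff]
    exact ⟨by rw [lt_div_iff₀ hp₁]; linarith, by field_simp; ring⟩
  set c := (p - 1) / p
  have hc₁ : c * (p / (p - 1)) = 1 := by simp only [c]; field_simp
  have hc₂ : c * p = p - 1 := by simp only [c]; field_simp
  have hρc : 0 < ρ ^ c := by positivity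
  have young := Real.young_inequality_of_nonneg (by positivity : 0 ≤ ρ ^ c * t ^ (p - 1))
    (by positivity : 0 ≤ B / ρ ^ c) hconj
  have e₁ : (ρ ^ c * t ^ (p - 1)) ^ (p / (p - 1)) = ρ * t ^ p := by
    rw [Real.mul_rpow (by positivity) (by positivity), ← Real.rpow_mul hρ.le,
      ← Real.rpow_mul ht, hc₁,
      show (p - 1) * (p / (p - 1)) = p by field_simp, Real.rpow_one]
  have e₂ : (B / ρ ^ c) ^ p = B ^ p / ρ ^ (p - 1) := by
    rw [Real.div_rpow hB hρc.le, ← Real.rpow_mul hρ.le, hc₂]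
  have e₃ : ρ ^ c * t ^ (p - 1) * (B / ρ ^ c) = t ^ (p - 1) * B := by field_simp
  rw [e₁, e₂, e₃] at young
  calc p * (t ^ (p - 1) * B) ≤ p * (ρ * t ^ p / (p / (p - 1)) + B ^ p / ρ ^ (p - 1) / p) := by
        gcongr
    _ = (p - 1) * ρ * t ^ p + B ^ p / ρ ^ (p - 1) := by field_simp

theorem inner_gradient_rpow_div_comp {E : Type*} [NormedAddCommGroup E] [InnerProductSpace ℝ E]
    [CompleteSpace E] {u φ : E → ℝ} {h : ℝ → ℝ} {h' p : ℝ} {x : E}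
    (hu : DifferentiableAt ℝ u x) (hφ : DifferentiableAt ℝ φ x) (hh : HasDerivAt h h' (u x))
    (hhu : h (u x) ≠ 0) (hp : 1 ≤ p) (v : E) :
    ⟪v, gradient (fun y => φ y ^ p / h (u y)) x⟫ =
      p * φ x ^ (p - 1) / h (u x) * ⟪v, gradient φ x⟫ -
        φ x ^ p * h' / h (u x) ^ 2 * ⟪v, gradient u x⟫ := by
  have hw : HasFDerivAt (fun y => φ y ^ p / h (u y))
      (φ x ^ p • (-h' / h (u x) ^ 2) • fderiv ℝ u x +
        (h (u x))⁻¹ • (p * φ x ^ (p - 1)) • fderiv ℝ φ x) x := by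
    simp only [div_eq_mul_inv]
    exact (hφ.hasFDerivAt.rpow_const (Or.inr hp)).mul
      ((hh.inv hhu).comp_hasFDerivAt x hu.hasFDerivAt)
  simp only [inner_gradient_right, hw.fderiv, add_apply, smul_apply, smul_eq_mul,
    Real.ringHom_apply]
  field_simp
  ring

theorem hasDerivAt_rpow_sub_one_add_rpow_sub_one {p q s : ℝ} (hs : 0 < s) :
    HasDerivAt (fun s => s ^ (p - 1) + s ^ (q - 1))
      ((p - 1) * s ^ (p - 2) + (q - 1) * s ^ (q - 2)) s := by
  rw [show p - 2 = p - 1 - 1 by ring, show q - 2 = q - 1 - 1 by ring]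
  exact (Real.hasDerivAt_rpow_const (Or.inl hs.ne')).add
    (Real.hasDerivAt_rpow_const (Or.inl hs.ne'))

theorem le_g_iff {p q ρ s : ℝ} (hp : 1 < p) (hs : 0 < s) :
    ρ ≤ g p q s ↔ ρ * ((p - 1) * (s ^ (p - 1) + s ^ (q - 1)) ^ ((p - 2) / (p - 1))) ≤
      (p - 1) * s ^ (p - 2) + (q - 1) * s ^ (q - 2) := by
  have : 0 < p - 1 := by linarith
  exact le_div_iff₀ (by positivity)

theorem picone_scalar_le_s3 {p ρ D H A B c φ : ℝ} (hp : 1 < p) (hρ : 0 < ρ) (hD : 0 < D)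
    (hH : ρ * ((p - 1) * D ^ ((p - 2) / (p - 1))) ≤ H) (hA : 0 ≤ A) (hB : 0 ≤ B) (hφ : 0 ≤ φ)
    (hc : c ≤ A * B) :
    A ^ (p - 2) * (p * φ ^ (p - 1) / D * c - φ ^ p * H / D ^ 2 * A ^ 2) ≤
      B ^ p / ρ ^ (p - 1) := by
  have hp₁ : 0 < p - 1 := by linarith
  set t := φ * A / D ^ (p - 1)⁻¹
  have ht : 0 ≤ t := by positivity
  have htp₁ : t ^ (p - 1) = φ ^ (p - 1) * A ^ (p - 1) / D := by
    rw [Real.div_rpow (by positivity) (by positivity), Real.mul_rpow hφ hA,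
      ← Real.rpow_mul hD.le, inv_mul_cancel₀ hp₁.ne', Real.rpow_one]
  have htp : t ^ p = φ ^ p * A ^ p / D ^ (p / (p - 1)) := by
    rw [Real.div_rpow (by positivity) (by positivity), Real.mul_rpow hφ hA,
      ← Real.rpow_mul hD.le, inv_mul_eq_div]
  have hA₁ : A ^ (p - 1) = A ^ (p - 2) * A := by
    simpa only [Real.rpow_one, show p - 2 + 1 = p - 1 by ring] using
      Real.rpow_add' hA (show p - 2 + 1 ≠ 0 by linarith)
  have hA₂ : A ^ p = A ^ (p - 2) * A ^ 2 := by
    simpa only [Real.rpow_two, sub_add_cancel] using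
      Real.rpow_add' hA (show p - 2 + 2 ≠ 0 by linarith)
  have hD₂ : D ^ 2 = D ^ ((p - 2) / (p - 1)) * D ^ (p / (p - 1)) := by
    rw [← Real.rpow_add hD, ← Real.rpow_natCast]
    congr 1
    field_simp
    ring
  have cross : A ^ (p - 2) * (p * φ ^ (p - 1) / D * c) ≤ p * (t ^ (p - 1) * B) :=
    calc A ^ (p - 2) * (p * φ ^ (p - 1) / D * c)
        ≤ A ^ (p - 2) * (p * φ ^ (p - 1) / D * (A * B)) := by gcongr
      _ = p * (t ^ (p - 1) * B) := by rw [htp₁, hA₁]; ring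
  have absorb : (p - 1) * ρ * t ^ p ≤ A ^ (p - 2) * (φ ^ p * H / D ^ 2 * A ^ 2) :=
    calc (p - 1) * ρ * t ^ p
        = φ ^ p * A ^ p * (ρ * ((p - 1) * D ^ ((p - 2) / (p - 1)))) / D ^ 2 := by
          rw [htp, hD₂]; field_simp
      _ ≤ φ ^ p * A ^ p * H / D ^ 2 := by gcongr
      _ = A ^ (p - 2) * (φ ^ p * H / D ^ 2 * A ^ 2) := by rw [hA₂]; ring
  have young := young_inequality_weighted hp hρ ht hB
  rw [mul_sub]
  linarith

/-- For `1 < q < p` and `0 < ρ₁ ≤ g p q t` for all `t > 0`: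
`|∇u|^(p-2)·⟨∇u, ∇(φ^p/(u^(p-1)+u^(q-1)))⟩ ≤ |∇φ|^p / ρ₁^(p-1)`
for differentiable `u > 0`, `φ ≥ 0` on an open set `Ω`. -/
theorem stmt3 (p q : ℝ) (hq : 1 < q) (hqp : q < p) (ρ₁ : ℝ) (hρ₁ : 0 < ρ₁)
    (hρ₁g : ∀ t : ℝ, 0 < t → ρ₁ ≤ g p q t) :
    ∀ (N : ℕ), 0 < N →
      ∀ (Ω : Set (EuclideanSpace ℝ (Fin N))), IsOpen Ω →
        ∀ (u φ : EuclideanSpace ℝ (Fin N) → ℝ),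
          (∀ x ∈ Ω, DifferentiableAt ℝ u x) →
          (∀ x ∈ Ω, DifferentiableAt ℝ φ x) →
          (∀ x ∈ Ω, 0 < u x) →
          (∀ x ∈ Ω, 0 ≤ φ x) →
          ∀ x ∈ Ω,
            ‖gradient u x‖ ^ (p - 2) *
                ⟪gradient u x,
                  gradient (fun y => φ y ^ p / (u y ^ (p - 1) + u y ^ (q - 1))) x⟫ ≤
              ‖gradient φ x‖ ^ p / ρ₁ ^ (p - 1) := by
  intro N _ Ω _ u φ hu hφ hu_pos hφ_nonneg x hx
  have hp : 1 < p := hq.trans hqp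
  have hux := hu_pos x hx
  rw [inner_gradient_rpow_div_comp (hu x hx) (hφ x hx)
    (hasDerivAt_rpow_sub_one_add_rpow_sub_one hux) (by positivity) hp.le,
    real_inner_self_eq_norm_sq]
  exact picone_scalar_le_s3 hp hρ₁ (by positivity) ((le_g_iff hp hux).1 (hρ₁g _ hux))
    (norm_nonneg _) (norm_nonneg _) (hφ_nonneg x hx) (real_inner_le_norm _ _)
end

section
/- Let 1 < q < p be real numbers. Then for every open set Ω ⊆ ℝ^N, every pair of functions u, φ : ℝ^N → ℝ differentiable at every point of Ω with u > 0 and φ ≥ 0 on Ω, and every x ∈ Ω, one has |∇u(x)|^(p-2) · ⟨∇u(x), ∇(φ^q/u^(q-1))(x)⟩ ≤ |∇φ(x)|^q · |∇u(x)|^(p-q). -/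
/-!
With `t = φ / u`, the gradient of `φ ^ q / u ^ (q - 1)` is `q t ^ (q - 1) ∇φ - (q - 1) t ^ q ∇u`.
By Cauchy–Schwarz, the left-hand side is then at most
`|∇u| ^ (p - q) (q s ^ (q - 1) |∇φ| - (q - 1) s ^ q)` with `s = t |∇u|`, and the bracket is at most
`|∇φ| ^ q`: it is the value at `|∇φ|` of the tangent line to the convex function `r ↦ r ^ q` at `s`.
-/

open scoped RealInnerProductSpace

theorem Real.rpow_tangent_le {q a b : ℝ} (hq : 1 < q) (ha : 0 ≤ a) (hb : 0 ≤ b) :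
    q * a ^ (q - 1) * b - (q - 1) * a ^ q ≤ b ^ q := by
  have hconj : Real.HolderConjugate (q / (q - 1)) q :=
    ((Real.holderConjugate_iff_eq_conjExponent hq).mpr rfl).symm
  have young := Real.young_inequality_of_nonneg (Real.rpow_nonneg ha (q - 1)) hb hconj
  have hexp : (q - 1) * (q / (q - 1)) = q := by field_simp [(by linarith : q - 1 ≠ 0)]
  rw [← Real.rpow_mul ha, hexp] at young
  have := mul_le_mul_of_nonneg_left young (by linarith : 0 ≤ q)
  field_simp at this
  linarith

theorem norm_rpow_mul_inner_le {F : Type*} [NormedAddCommGroup F] [InnerProductSpace ℝ F]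
    {p q t : ℝ} (hq : 1 < q) (ht : 0 ≤ t) (G H : F) :
    ‖G‖ ^ (p - 2) * ⟪G, (q * t ^ (q - 1)) • H - ((q - 1) * t ^ q) • G⟫ ≤
      ‖H‖ ^ q * ‖G‖ ^ (p - q) := by
  rcases eq_or_ne G 0 with rfl | hG
  · simp only [inner_zero_left, mul_zero]
    positivity
  set g := ‖G‖
  set h := ‖H‖
  have hg : 0 < g := norm_pos_iff.mpr hG
  have hinner : ⟪G, (q * t ^ (q - 1)) • H - ((q - 1) * t ^ q) • G⟫ ≤
      q * t ^ (q - 1) * (h * g) - (q - 1) * t ^ q * g ^ 2 := by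
    rw [inner_sub_right, real_inner_smul_right, real_inner_smul_right,
      real_inner_self_eq_norm_sq, real_inner_comm]
    gcongr
    exact real_inner_le_norm H G
  have e₁ : g ^ (p - q) * g ^ (q - 1) = g ^ (p - 2) * g := by
    rw [← Real.rpow_add hg, ← Real.rpow_add_one hg.ne']; ring_nf
  have e₂ : g ^ (p - q) * g ^ q = g ^ (p - 2) * g ^ 2 := by
    rw [← Real.rpow_add hg, ← Real.rpow_natCast, ← Real.rpow_add hg]; ring_nf
  calc g ^ (p - 2) * ⟪G, (q * t ^ (q - 1)) • H - ((q - 1) * t ^ q) • G⟫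
      ≤ g ^ (p - 2) * (q * t ^ (q - 1) * (h * g) - (q - 1) * t ^ q * g ^ 2) := by gcongr
    _ = g ^ (p - q) * (q * (t * g) ^ (q - 1) * h - (q - 1) * (t * g) ^ q) := by
      rw [Real.mul_rpow ht hg.le, Real.mul_rpow ht hg.le]
      linear_combination ((q - 1) * t ^ q) * e₂ - (q * t ^ (q - 1) * h) * e₁
    _ ≤ g ^ (p - q) * h ^ q := by
      gcongr
      exact Real.rpow_tangent_le hq (by positivity) (norm_nonneg H)
    _ = h ^ q * g ^ (p - q) := mul_comm _ _

section
variable {E : Type*} [NormedAddCommGroup E] [InnerProductSpace ℝ E] [CompleteSpace E]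
  {u φ : E → ℝ} {u' φ' x : E} {q : ℝ}

theorem HasGradientAt.rpow_div_rpow_sub_one (hq : 1 ≤ q) (hu : HasGradientAt u u' x)
    (hφ : HasGradientAt φ φ' x) (hux : 0 < u x) (hφx : 0 ≤ φ x) :
    HasGradientAt (fun y => φ y ^ q / u y ^ (q - 1))
      ((q * (φ x / u x) ^ (q - 1)) • φ' - ((q - 1) * (φ x / u x) ^ q) • u') x := by
  rw [hasGradientAt_iff_hasFDerivAt] at *
  set A := u x ^ (q - 1)
  have hA : 0 < A := Real.rpow_pos_of_pos hux _
  have hnum := hφ.rpow_const (Or.inr hq)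
  have hden := (hasDerivAt_inv hA.ne').comp_hasFDerivAt x (hu.rpow_const (Or.inl hux.ne'))
  have hcoef₁ : q * (φ x / u x) ^ (q - 1) = A⁻¹ * (q * φ x ^ (q - 1)) := by
    rw [Real.div_rpow hφx hux.le]; ring
  have hcoef₂ : (q - 1) * (φ x / u x) ^ q =
      -(φ x ^ q * (-(A ^ 2)⁻¹ * ((q - 1) * u x ^ (q - 1 - 1)))) := by
    have h1 : u x ^ (q - 1 - 1) = A / u x := Real.rpow_sub_one hux.ne' _
    have h2 : u x ^ q = A * u x := by
      simp only [A, Real.rpow_sub_one hux.ne' q]; field_simp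
    rw [Real.div_rpow hφx hux.le, h1, h2]
    field_simp
  rw [map_sub, map_smul, map_smul, hcoef₁, hcoef₂]
  refine (hnum.mul hden).congr_fderiv ?_
  simp only [Function.comp_apply]
  module

end

theorem stmt5_general (p q : ℝ) (hq : 1 < q) :
    ∀ (N : ℕ), 0 < N →
      ∀ (Ω : Set (EuclideanSpace ℝ (Fin N))), IsOpen Ω →
        ∀ (u φ : EuclideanSpace ℝ (Fin N) → ℝ),
          (∀ x ∈ Ω, DifferentiableAt ℝ u x) →
          (∀ x ∈ Ω, DifferentiableAt ℝ φ x) →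
          (∀ x ∈ Ω, 0 < u x) →
          (∀ x ∈ Ω, 0 ≤ φ x) →
          ∀ x ∈ Ω,
            ‖gradient u x‖ ^ (p - 2) *
                ⟪gradient u x, gradient (fun y => φ y ^ q / u y ^ (q - 1)) x⟫ ≤
              ‖gradient φ x‖ ^ q * ‖gradient u x‖ ^ (p - q) := by
  intro N _ Ω _ u φ hu hφ hu_pos hφ_nonneg x hx
  have hgrad := (hu x hx).hasGradientAt.rpow_div_rpow_sub_one hq.le (hφ x hx).hasGradientAt
    (hu_pos x hx) (hφ_nonneg x hx)
  rw [hgrad.gradient]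
  exact norm_rpow_mul_inner_le hq (div_nonneg (hφ_nonneg x hx) (hu_pos x hx).le) _ _

/-- For `1 < q < p`, differentiable `u > 0`, `φ ≥ 0` on an open set `Ω ⊆ ℝ^N`, and `x ∈ Ω`:
`|∇u|^(p-2)·⟨∇u, ∇(φ^q/u^(q-1))⟩ ≤ |∇φ|^q·|∇u|^(p-q)`. -/
theorem stmt5 (p q : ℝ) (hq : 1 < q) (hqp : q < p) :
    ∀ (N : ℕ), 0 < N →
      ∀ (Ω : Set (EuclideanSpace ℝ (Fin N))), IsOpen Ω →
        ∀ (u φ : EuclideanSpace ℝ (Fin N) → ℝ),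
          (∀ x ∈ Ω, DifferentiableAt ℝ u x) →
          (∀ x ∈ Ω, DifferentiableAt ℝ φ x) →
          (∀ x ∈ Ω, 0 < u x) →
          (∀ x ∈ Ω, 0 ≤ φ x) →
          ∀ x ∈ Ω,
            ‖gradient u x‖ ^ (p - 2) *
                ⟪gradient u x, gradient (fun y => φ y ^ q / u y ^ (q - 1)) x⟫ ≤
              ‖gradient φ x‖ ^ q * ‖gradient u x‖ ^ (p - q) :=
  stmt5_general p q hq
end

section
/- Let 1 < q < p be real numbers, let E be a real inner product space, let X, Y ∈ E, and let c ≥ 0 be a real number. Then q·‖X‖^(p-2)·⟨X,Y⟩·c^(q-1) − (q-1)·‖X‖^p·c^q ≤ ‖Y‖^q·‖X‖^(p-q). -/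
open scoped RealInnerProductSpace

/-!
After Cauchy–Schwarz `⟪X, Y⟫ ≤ ‖X‖‖Y‖`, the factor `‖X‖ ^ (p - q)` splits off and what remains is
`q b t ^ (q - 1) - (q - 1) t ^ q ≤ b ^ q` with `b = ‖Y‖`, `t = ‖X‖ c`: the tangent line of the
convex function `x ↦ x ^ q` at `t` lies below its graph, i.e. weighted AM–GM with weights
`1 / q` and `(q - 1) / q`.
-/

namespace Real

theorem mul_mul_rpow_sub_one_le {q b t : ℝ} (hq : 1 ≤ q) (hb : 0 ≤ b) (ht : 0 ≤ t) :
    q * b * t ^ (q - 1) ≤ b ^ q + (q - 1) * t ^ q := by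
  have hq0 : 0 < q := by linarith
  have amgm := geom_mean_le_arith_mean2_weighted (inv_nonneg.2 hq0.le)
    (div_nonneg (sub_nonneg.2 hq) hq0.le) (rpow_nonneg hb q) (rpow_nonneg ht q)
    (by field_simp; ring : q⁻¹ + (q - 1) / q = 1)
  rw [← rpow_mul hb, ← rpow_mul ht, mul_inv_cancel₀ hq0.ne', rpow_one,
    mul_div_cancel₀ _ hq0.ne'] at amgm
  calc q * b * t ^ (q - 1) = q * (b * t ^ (q - 1)) := by ring
    _ ≤ q * (q⁻¹ * b ^ q + (q - 1) / q * t ^ q) := by gcongr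
    _ = b ^ q + (q - 1) * t ^ q := by field_simp

end Real

theorem stmt7_general {E : Type*} [NormedAddCommGroup E] [InnerProductSpace ℝ E]
    (p q : ℝ) (hq : 1 < q) (X Y : E) (c : ℝ) (hc : 0 ≤ c) :
    q * ‖X‖ ^ (p - 2) * ⟪X, Y⟫ * c ^ (q - 1) - (q - 1) * ‖X‖ ^ p * c ^ q ≤
      ‖Y‖ ^ q * ‖X‖ ^ (p - q) := by
  rcases eq_or_ne X 0 with rfl | hX
  · have hq1 : 0 ≤ q - 1 := by linarith
    simp only [inner_zero_left, mul_zero, zero_mul, zero_sub, norm_zero]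
    have : 0 ≤ (q - 1) * (0 : ℝ) ^ p * c ^ q := by positivity
    have : 0 ≤ ‖Y‖ ^ q * (0 : ℝ) ^ (p - q) := by positivity
    linarith
  set a := ‖X‖
  set b := ‖Y‖
  have ha : 0 < a := norm_pos_iff.2 hX
  have tangent := Real.mul_mul_rpow_sub_one_le hq.le (norm_nonneg Y) (mul_nonneg ha.le hc)
  rw [Real.mul_rpow ha.le hc, Real.mul_rpow ha.le hc] at tangent
  calc q * a ^ (p - 2) * ⟪X, Y⟫ * c ^ (q - 1) - (q - 1) * a ^ p * c ^ q
      ≤ q * a ^ (p - 2) * (a * b) * c ^ (q - 1) - (q - 1) * a ^ p * c ^ q := by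
        gcongr
        exact real_inner_le_norm X Y
    _ = a ^ (p - q) * (q * b * (a ^ (q - 1) * c ^ (q - 1)) - (q - 1) * (a ^ q * c ^ q)) := by
        have h₁ : a ^ (p - 2) * a = a ^ (p - q) * a ^ (q - 1) := by
          rw [← Real.rpow_add_one ha.ne', ← Real.rpow_add ha]; ring_nf
        have h₂ : a ^ p = a ^ (p - q) * a ^ q := by
          rw [← Real.rpow_add ha]; ring_nf
        linear_combination (q * b * c ^ (q - 1)) * h₁ - (q - 1) * c ^ q * h₂
    _ ≤ a ^ (p - q) * b ^ q := by
        gcongr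
        linarith
    _ = b ^ q * a ^ (p - q) := mul_comm _ _

/-- For `1 < q < p`, vectors `X, Y` in a real inner product space and `c ≥ 0`:
`q·‖X‖^(p-2)·⟨X,Y⟩·c^(q-1) − (q-1)·‖X‖^p·c^q ≤ ‖Y‖^q·‖X‖^(p-q)`. -/
theorem stmt7 {E : Type*} [NormedAddCommGroup E] [InnerProductSpace ℝ E]
    (p q : ℝ) (hq : 1 < q) (hqp : q < p) (X Y : E) (c : ℝ) (hc : 0 ≤ c) :
    q * ‖X‖ ^ (p - 2) * ⟪X, Y⟫ * c ^ (q - 1) - (q - 1) * ‖X‖ ^ p * c ^ q ≤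
      ‖Y‖ ^ q * ‖X‖ ^ (p - q) :=
  stmt7_general p q hq X Y c hc
end

section
/- Let p > 1 be a real number, let E be a real inner product space, let X, Y ∈ E, and let c ≥ 0 be a real number. Then p·‖X‖^(p-2)·⟨X,Y⟩·c^(p-1) − (p-1)·‖X‖^p·c^p ≤ ‖Y‖^p. -/
open scoped RealInnerProductSpace

/-! The left-hand side is at most `p a^(p-1) ‖Y‖ - (p-1) a^p` with `a = c‖X‖`, by Cauchy–Schwarz;
this is the tangent line of the convex function `t ↦ t^p` at `a`, evaluated at `‖Y‖`, which
Young's inequality `a^(p-1) b ≤ a^p / q + b^p / p` (with `1/p + 1/q = 1`) bounds by `‖Y‖^p`. -/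

theorem Real.mul_rpow_sub_one_mul_sub_le_rpow {p : ℝ} (hp : 1 < p) {a b : ℝ}
    (ha : 0 ≤ a) (hb : 0 ≤ b) :
    p * a ^ (p - 1) * b - (p - 1) * a ^ p ≤ b ^ p := by
  have hp0 : 0 < p := by linarith
  have hq : (p / (p - 1)).HolderConjugate p :=
    ((Real.holderConjugate_iff_eq_conjExponent hp).mpr rfl).symm
  have hpow : (a ^ (p - 1)) ^ (p / (p - 1)) = a ^ p := by
    rw [← Real.rpow_mul ha, mul_div_cancel₀ p (by linarith : p - 1 ≠ 0)]
  have young := Real.young_inequality_of_nonneg (Real.rpow_nonneg ha (p - 1)) hb hq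
  rw [hpow, div_div_eq_mul_div] at young
  have hscaled := mul_le_mul_of_nonneg_left young hp0.le
  have hsimp : p * (a ^ p * (p - 1) / p + b ^ p / p) = (p - 1) * a ^ p + b ^ p := by
    field_simp
  linarith

theorem norm_rpow_sub_two_mul_inner_le (p : ℝ) {E : Type*} [NormedAddCommGroup E]
    [InnerProductSpace ℝ E] (X Y : E) :
    ‖X‖ ^ (p - 2) * ⟪X, Y⟫ ≤ ‖X‖ ^ (p - 1) * ‖Y‖ := by
  rcases eq_or_ne X 0 with rfl | hX
  · simp only [inner_zero_left, mul_zero]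
    positivity
  have hpow : ‖X‖ ^ (p - 1) = ‖X‖ ^ (p - 2) * ‖X‖ := by
    rw [show p - 1 = (p - 2) + 1 by ring, Real.rpow_add (norm_pos_iff.mpr hX), Real.rpow_one]
  calc ‖X‖ ^ (p - 2) * ⟪X, Y⟫ ≤ ‖X‖ ^ (p - 2) * (‖X‖ * ‖Y‖) :=
        mul_le_mul_of_nonneg_left (real_inner_le_norm X Y) (by positivity)
    _ = ‖X‖ ^ (p - 1) * ‖Y‖ := by rw [hpow, mul_assoc]

/-- For `p > 1`, vectors `X, Y` in a real inner product space and `c ≥ 0`: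
`p·‖X‖^(p-2)·⟨X,Y⟩·c^(p-1) − (p-1)·‖X‖^p·c^p ≤ ‖Y‖^p`. -/
theorem stmt8 {E : Type*} [NormedAddCommGroup E] [InnerProductSpace ℝ E]
    (p : ℝ) (hp : 1 < p) (X Y : E) (c : ℝ) (hc : 0 ≤ c) :
    p * ‖X‖ ^ (p - 2) * ⟪X, Y⟫ * c ^ (p - 1) - (p - 1) * ‖X‖ ^ p * c ^ p ≤
      ‖Y‖ ^ p := by
  have hX := norm_nonneg X
  have hcs : p * (‖X‖ ^ (p - 2) * ⟪X, Y⟫) * c ^ (p - 1) ≤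
      p * (‖X‖ ^ (p - 1) * ‖Y‖) * c ^ (p - 1) := by
    have hp0 : 0 ≤ p := by linarith
    gcongr ?_ * _
    exact mul_le_mul_of_nonneg_left (norm_rpow_sub_two_mul_inner_le p X Y) hp0
  have htangent := Real.mul_rpow_sub_one_mul_sub_le_rpow hp (mul_nonneg hX hc) (norm_nonneg Y)
  rw [Real.mul_rpow hX hc, Real.mul_rpow hX hc] at htangent
  linarith
end
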